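/- arXiv:1801.08782 — 2 statements merged into one kernel-verified Lean document; each statement's English description precedes it below -/
import Mathlib

section
/- Let Γ be a tetravalent G-half-arc-transitive graph for some G ≤ Aut(Γ), let r = rad_G(Γ), a = att_G(Γ) and ℓ = 2r/a. Fix one of the two G-induced orientations of the edges of Γ, let v be a vertex of Γ, and let C = (u_0, u_1, …, u_{2r−1}) and C' = (v_0, v_1, …, v_{2r−1}) be the two G-alternating cycles containing v, where u_0 = v_0 = v, v is the tail of the two arcs of C incident to it, and u_ℓ = v_{q_t ℓ}. Then u_{iℓ} = v_{i q_t ℓ} holds for each 0 ≤ i < a. Similarly, if v_ℓ = u_{q_h ℓ} then v_{iℓ} = u_{i q_h ℓ} holds for each 0 ≤ i < a, and if v_ℓ = u_{−q_h ℓ} then v_{iℓ} = u_{−i q_h ℓ} holds for each 0 ≤ i < a. -/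
/-! Common definitions for tetravalent half-arc-transitive graph theory. -/

open SimpleGraph Set

namespace HalfArc

variable {V W : Type*}

/-- A subgroup of automorphisms acts transitively on the vertices. -/
def IsVertexTrans (Γ : SimpleGraph V) (G : Subgroup (Γ ≃g Γ)) : Prop :=
  ∀ u v : V, ∃ g ∈ G, g u = v

/-- A subgroup of automorphisms acts transitively on the edges. -/
def IsEdgeTrans (Γ : SimpleGraph V) (G : Subgroup (Γ ≃g Γ)) : Prop :=
  ∀ ⦃u v u' v' : V⦄, Γ.Adj u v → Γ.Adj u' v' →
    ∃ g ∈ G, (g u = u' ∧ g v = v') ∨ (g u = v' ∧ g v = u')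

/-- A subgroup of automorphisms acts transitively on the arcs (ordered pairs of
adjacent vertices). -/
def IsArcTrans (Γ : SimpleGraph V) (G : Subgroup (Γ ≃g Γ)) : Prop :=
  ∀ ⦃u v u' v' : V⦄, Γ.Adj u v → Γ.Adj u' v' → ∃ g ∈ G, g u = u' ∧ g v = v'

/-- Half-arc-transitive: vertex- and edge- but not arc-transitive. -/
def IsHalfArcTrans (Γ : SimpleGraph V) (G : Subgroup (Γ ≃g Γ)) : Prop :=
  IsVertexTrans Γ G ∧ IsEdgeTrans Γ G ∧ ¬ IsArcTrans Γ G

/-- An alternating cycle of length `n` in a graph `Γ` whose edges carry an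
orientation `O`: a cyclic sequence of pairwise distinct vertices in which
consecutive vertices are adjacent and any two consecutive edges have opposite
orientations. -/
structure AltCycle (Γ : SimpleGraph V) (O : V → V → Prop) (n : ℕ) where
  f : ZMod n → V
  inj : Function.Injective f
  adj : ∀ i, Γ.Adj (f i) (f (i + 1))
  alt : ∀ i, O (f i) (f (i + 1)) ↔ O (f (i + 2)) (f (i + 1))

/-- The vertex set of an alternating cycle. -/
def cycVerts {Γ : SimpleGraph V} {O : V → V → Prop} {n : ℕ} (c : AltCycle Γ O n) : Set V :=
  Set.range c.f

/-- The edge set of an alternating cycle. -/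
def cycEdges {Γ : SimpleGraph V} {O : V → V → Prop} {n : ℕ} (c : AltCycle Γ O n) :
    Set (Sym2 V) :=
  Set.range fun i => s(c.f i, c.f (i + 1))

/-- The sets of edges of alternating cycles (an alternating cycle, as a subgraph,
is determined by its edge set). -/
def IsAltEdgeSet (Γ : SimpleGraph V) (O : V → V → Prop) (n : ℕ) (E : Set (Sym2 V)) : Prop :=
  ∃ c : AltCycle Γ O n, cycEdges c = E

/-- The vertex sets of alternating cycles. -/
def IsAltVertSet (Γ : SimpleGraph V) (O : V → V → Prop) (n : ℕ) (A : Set V) : Prop :=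
  ∃ c : AltCycle Γ O n, cycVerts c = A

/-- The set of vertices covered by a set of edges. -/
def suppOf (E : Set (Sym2 V)) : Set V := {v | ∃ e ∈ E, v ∈ e}

/-- The graph of alternating cycles: its vertices are the alternating cycles
(represented by their edge sets), two of them adjacent whenever they share a vertex. -/
def altGraph (Γ : SimpleGraph V) (O : V → V → Prop) (n : ℕ) :
    SimpleGraph {E : Set (Sym2 V) // IsAltEdgeSet Γ O n E} where
  Adj X Y := X ≠ Y ∧ (suppOf X.1 ∩ suppOf Y.1).Nonempty
  symm := by
    refine ⟨?_⟩
    rintro X Y ⟨hne, x, hx1, hx2⟩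
    exact ⟨hne.symm, x, hx2, hx1⟩
  loopless := by refine ⟨?_⟩; rintro X ⟨hne, -⟩; exact hne rfl

/-- The attachment sets: nonempty intersections of (the vertex sets of) two distinct
alternating cycles. -/
def IsAttSet (Γ : SimpleGraph V) (O : V → V → Prop) (n : ℕ) (A : Set V) : Prop :=
  ∃ c c' : AltCycle Γ O n, cycEdges c ≠ cycEdges c' ∧ (cycVerts c ∩ cycVerts c').Nonempty ∧
    A = cycVerts c ∩ cycVerts c'

/-- `attachmentIs Γ O n a` : any two distinct alternating cycles with nonempty
intersection meet in exactly `a` vertices. -/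
def attachmentIs (Γ : SimpleGraph V) (O : V → V → Prop) (n a : ℕ) : Prop :=
  ∀ A : Set V, IsAttSet Γ O n A → A.ncard = a

/-- A `k`-step rotation of an alternating cycle (in one of the two directions). -/
def IsRot {Γ : SimpleGraph V} {O : V → V → Prop} {n : ℕ} (c : AltCycle Γ O n)
    (g : V → V) (k : ℕ) : Prop :=
  (∀ i, g (c.f i) = c.f (i + k)) ∨ (∀ i, g (c.f i) = c.f (i - k))

/-- The setup of the paper: a finite connected tetravalent graph `Γ`, a subgroup `G`
of its automorphism group acting half-arc-transitively, one of the two `G`-induced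
orientations `O` of the edges of `Γ` (an orbit of `G` on arcs), the `G`-radius `r`
(half the common length of all `G`-alternating cycles) and the `G`-attachment
number `att`, together with the basic structural facts relating them. -/
structure Setup (V : Type*) where
  Γ : SimpleGraph V
  finite : Finite V
  conn : Γ.Connected
  tetra : ∀ v : V, (Γ.neighborSet v).ncard = 4
  G : Subgroup (Γ ≃g Γ)
  hat : IsHalfArcTrans Γ G
  O : V → V → Prop
  O_adj : ∀ ⦃u v⦄, O u v → Γ.Adj u v
  O_choice : ∀ ⦃u v⦄, Γ.Adj u v → (O u v ↔ ¬ O v u)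
  O_inv : ∀ g ∈ G, ∀ ⦃u v⦄, O u v → O (g u) (g v)
  O_orbit : ∀ ⦃u v u' v'⦄, O u v → O u' v' → ∃ g ∈ G, g u = u' ∧ g v = v'
  r : ℕ
  r_pos : 0 < r
  /-- every vertex lies on exactly two `G`-alternating cycles, each of length `2 * r` -/
  alt_cover : ∀ v : V, {E : Set (Sym2 V) | IsAltEdgeSet Γ O (2 * r) E ∧ v ∈ suppOf E}.ncard = 2
  att : ℕ
  att_pos : 0 < att
  /-- any two non-disjoint `G`-alternating cycles meet in exactly `att` vertices -/
  att_eq : attachmentIs Γ O (2 * r) att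
  att_dvd : att ∣ 2 * r

namespace Setup

variable {V : Type*} (S : Setup V)

/-- The kernel of the action of `G` on the set of `G`-alternating cycles:
the elements of `G` fixing every `G`-alternating cycle setwise. -/
def altKernel : Subgroup (S.Γ ≃g S.Γ) where
  carrier := {g | g ∈ S.G ∧ ∀ E : Set (Sym2 V),
    IsAltEdgeSet S.Γ S.O (2 * S.r) E → Sym2.map (g : V → V) '' E = E}
  one_mem' := by
    refine ⟨S.G.one_mem, fun E _ => ?_⟩
    have : Sym2.map ((1 : S.Γ ≃g S.Γ) : V → V) = id := by
      funext e
      have : ((1 : S.Γ ≃g S.Γ) : V → V) = id := rfl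
      rw [this, Sym2.map_id, id]
    rw [this, Set.image_id]
  mul_mem' := by
    rintro g h ⟨hg, hg'⟩ ⟨hh, hh'⟩
    refine ⟨S.G.mul_mem hg hh, fun E hE => ?_⟩
    have hcomp : Sym2.map ((g * h : S.Γ ≃g S.Γ) : V → V)
        = Sym2.map (g : V → V) ∘ Sym2.map (h : V → V) := by
      funext e
      have : ((g * h : S.Γ ≃g S.Γ) : V → V) = (g : V → V) ∘ (h : V → V) := rfl
      rw [this, Function.comp_apply, ← Sym2.map_map]
    rw [hcomp, Set.image_comp, hh' E hE, hg' E hE]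
  inv_mem' := by
    rintro g ⟨hg, hg'⟩
    refine ⟨S.G.inv_mem hg, fun E hE => ?_⟩
    conv_lhs => rw [← hg' E hE]
    rw [← Set.image_comp]
    have : Sym2.map ((g⁻¹ : S.Γ ≃g S.Γ) : V → V) ∘ Sym2.map (g : V → V) = id := by
      funext e
      rw [Function.comp_apply, Sym2.map_map]
      have h1 : ((g⁻¹ : S.Γ ≃g S.Γ) : V → V) ∘ (g : V → V) = id := by
        funext v
        exact g.toEquiv.symm_apply_apply v
      rw [h1, Sym2.map_id]
    rw [this, Set.image_id]

/-- The kernel of the action of `G` on a collection of sets of vertices. -/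
def kernelOn (P : Set V → Prop) : Subgroup (S.Γ ≃g S.Γ) where
  carrier := {g | g ∈ S.G ∧ ∀ A : Set V, P A → (g : V → V) '' A = A}
  one_mem' := ⟨S.G.one_mem, fun A _ => by
    have : ((1 : S.Γ ≃g S.Γ) : V → V) = id := rfl
    rw [this, Set.image_id]⟩
  mul_mem' := by
    rintro g h ⟨hg, hg'⟩ ⟨hh, hh'⟩
    refine ⟨S.G.mul_mem hg hh, fun A hA => ?_⟩
    have : ((g * h : S.Γ ≃g S.Γ) : V → V) = (g : V → V) ∘ (h : V → V) := rfl
    rw [this, Set.image_comp, hh' A hA, hg' A hA]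
  inv_mem' := by
    rintro g ⟨hg, hg'⟩
    refine ⟨S.G.inv_mem hg, fun A hA => ?_⟩
    conv_lhs => rw [← hg' A hA]
    rw [← Set.image_comp]
    have : ((g⁻¹ : S.Γ ≃g S.Γ) : V → V) ∘ (g : V → V) = id := by
      funext v; exact g.toEquiv.symm_apply_apply v
    rw [this, Set.image_id]

/-- The kernel of the action of `G` on the set of all `G`-attachment sets. -/
def attKernel : Subgroup (S.Γ ≃g S.Γ) :=
  S.kernelOn (IsAttSet S.Γ S.O (2 * S.r))

/-- The block `B_s(C; u_i) = {u_{i+2sj} : 0 ≤ j < att}` of Construction 5.3. -/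
def blockSet (s : ℕ) (c : AltCycle S.Γ S.O (2 * S.r)) (i : ZMod (2 * S.r)) : Set V :=
  {v | ∃ j : ℕ, j < S.att ∧ v = c.f (i + (2 * s * j : ℕ))}

/-- The imprimitivity block system `B` of Construction 5.3. -/
def Blocks (s : ℕ) : Set (Set V) :=
  {A | ∃ (c : AltCycle S.Γ S.O (2 * S.r)) (i : ZMod (2 * S.r)), A = S.blockSet s c i}

/-- The quotient graph `Γ_B` of `Γ` with respect to the block system `B`. -/
def quotGraph (s : ℕ) : SimpleGraph {A : Set V // A ∈ S.Blocks s} where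
  Adj X Y := X ≠ Y ∧ ∃ u ∈ X.1, ∃ v ∈ Y.1, S.Γ.Adj u v
  symm := by
    refine ⟨?_⟩
    rintro X Y ⟨hne, u, hu, v, hv, ha⟩
    exact ⟨hne.symm, v, hv, u, hu, ha.symm⟩
  loopless := by refine ⟨?_⟩; rintro X ⟨hne, -⟩; exact hne rfl

/-- The kernel of the action of `G` on the quotient graph `Γ_B`. -/
def quotKernel (s : ℕ) : Subgroup (S.Γ ≃g S.Γ) :=
  S.kernelOn (· ∈ S.Blocks s)

/-- The orientation of the edges of the quotient graph `Γ_B` induced by `O`. -/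
def quotO (s : ℕ) (X Y : {A : Set V // A ∈ S.Blocks s}) : Prop :=
  ∃ u ∈ X.1, ∃ v ∈ Y.1, S.O u v

end Setup

/-- The data defining the parameters `q_t` and `q_h` of Section 3: a vertex `v`,
the two `G`-alternating cycles `c` and `c'` through `v` (with `v = u_0 = v_0` and
`v` the tail of the two arcs of `c` incident to it), and the minimality properties
defining `q_t` and `q_h`.  Here `ell = 2r/att`. -/
structure JumpData {V : Type*} (S : Setup V) where
  v : V
  c : AltCycle S.Γ S.O (2 * S.r)
  c' : AltCycle S.Γ S.O (2 * S.r)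
  ell : ℕ
  hell : S.att * ell = 2 * S.r
  hc : c.f 0 = v
  hc' : c'.f 0 = v
  hne : cycEdges c ≠ cycEdges c'
  htail₁ : S.O v (c.f 1)
  htail₂ : S.O v (c.f (-1))
  qt : ℕ
  qh : ℕ
  hqt : c'.f ((qt * ell : ℕ)) = c.f ((ell : ℕ)) ∨
    c'.f ((qt * ell : ℕ)) = c.f (-(ell : ZMod (2 * S.r)))
  hqt_min : ∀ m : ℕ, m < qt → ¬(c'.f ((m * ell : ℕ)) = c.f ((ell : ℕ)) ∨
    c'.f ((m * ell : ℕ)) = c.f (-(ell : ZMod (2 * S.r))))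
  hqh : c.f ((qh * ell : ℕ)) = c'.f ((ell : ℕ)) ∨
    c.f ((qh * ell : ℕ)) = c'.f (-(ell : ZMod (2 * S.r)))
  hqh_min : ∀ m : ℕ, m < qh → ¬(c.f ((m * ell : ℕ)) = c'.f ((ell : ℕ)) ∨
    c.f ((m * ell : ℕ)) = c'.f (-(ell : ZMod (2 * S.r))))

/-- The `G`-alternating jump `jum_G(Γ) = min {q_t, q_h}`. -/
def JumpData.jump {V : Type*} {S : Setup V} (J : JumpData S) : ℕ := min J.qt J.qh

end HalfArc

/-! Since `G` is transitive on the arcs of one orientation, the stabiliser in `G` of a vertex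
`w` lying on the two alternating cycles `C` and `C'` contains an element reflecting `C` at `w`.
It maps `C'` onto itself, and either reflects it at `w` too or fixes it pointwise; the latter
makes every common vertex of `C` and `C'` equal or antipodal to `w` on `C`, which is impossible
at `w = v` and at `w = u_ℓ` once `a ≥ 3`. The product of the reflections at `v` and at `u_ℓ` then
translates `C` by `2ℓ` and `C'` by `2 q ℓ`, which propagates `u_{iℓ} = v_{iqℓ}` from `i = 0, 1`
to every `i`. For `a ≤ 2` only `i = 0, 1` occur. -/

namespace HalfArc

variable {V : Type*}

namespace AltCycle

variable {Γ : SimpleGraph V} {O : V → V → Prop} {n : ℕ}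

def reverse (c : AltCycle Γ O n) : AltCycle Γ O n where
  f i := c.f (-i)
  inj _ _ h := neg_injective (c.inj h)
  adj i := by
    have h := c.adj (-(i + 1))
    rw [show -(i + 1) + 1 = -i by ring] at h
    exact h.symm
  alt i := by
    have h := c.alt (-(i + 2))
    rw [show -(i + 2) + 1 = -(i + 1) by ring, show -(i + 2) + 2 = -i by ring] at h
    exact h.symm

theorem cycEdges_reverse (c : AltCycle Γ O n) : cycEdges c.reverse = cycEdges c := by
  ext e
  constructor
  · rintro ⟨i, rfl⟩
    refine ⟨-(i + 1), ?_⟩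
    simp only [reverse]
    rw [show -(i + 1) + 1 = -i by ring, Sym2.eq_swap]
  · rintro ⟨i, rfl⟩
    refine ⟨-(i + 1), ?_⟩
    simp only [reverse]
    rw [neg_neg, show -(-(i + 1) + 1) = i by ring, Sym2.eq_swap]

theorem adj_sub_one (c : AltCycle Γ O n) (t : ZMod n) : Γ.Adj (c.f t) (c.f (t - 1)) := by
  simpa using (c.adj (t - 1)).symm

theorem mk_mem_cycEdges_iff (c : AltCycle Γ O n) (t : ZMod n) (y : V) :
    s(c.f t, y) ∈ cycEdges c ↔ y = c.f (t + 1) ∨ y = c.f (t - 1) := by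
  constructor
  · rintro ⟨i, hi⟩
    rcases Sym2.eq_iff.mp hi with ⟨h, rfl⟩ | ⟨rfl, h⟩
    · rw [c.inj h]; exact Or.inl rfl
    · rw [← c.inj h, add_sub_cancel_right]; exact Or.inr rfl
  · rintro (rfl | rfl)
    · exact ⟨t, rfl⟩
    · exact ⟨t - 1, by
        show s(c.f (t - 1), c.f (t - 1 + 1)) = _
        rw [sub_add_cancel, Sym2.eq_swap]⟩

theorem mem_cycVerts_of_mk_mem_cycEdges {c : AltCycle Γ O n} {x y : V}
    (h : s(x, y) ∈ cycEdges c) : x ∈ cycVerts c := by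
  obtain ⟨i, hi⟩ := h
  rcases Sym2.eq_iff.mp hi with ⟨hx, -⟩ | ⟨-, hx⟩
  exacts [⟨i, hx⟩, ⟨i + 1, hx⟩]

theorem mem_suppOf_cycEdges {c : AltCycle Γ O n} {x : V} (hx : x ∈ cycVerts c) :
    x ∈ suppOf (cycEdges c) := by
  obtain ⟨i, rfl⟩ := hx
  exact ⟨_, ⟨i, rfl⟩, Sym2.mem_mk_left _ _⟩

section SameEdges

variable [NeZero n] {c d : AltCycle Γ O n}

theorem f_add_eq_of_cycEdges_subset (h2 : (2 : ZMod n) ≠ 0) (hE : cycEdges c ⊆ cycEdges d)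
    {s t : ZMod n} (h0 : c.f s = d.f t)
    (h1 : c.f (s + 1) = d.f (t + 1)) (i : ZMod n) : c.f (s + i) = d.f (t + i) := by
  have step : ∀ a b : ZMod n, c.f a = d.f b → c.f (a + 1) = d.f (b + 1) →
      c.f (a + 2) = d.f (b + 2) := by
    intro a b ha ha1
    have hmem : s(d.f (b + 1), c.f (a + 1 + 1)) ∈ cycEdges d := ha1 ▸ hE ⟨a + 1, rfl⟩
    rcases (d.mk_mem_cycEdges_iff _ _).mp hmem with h | h
    · rwa [add_assoc, add_assoc, one_add_one_eq_two] at h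
    · rw [add_sub_cancel_right, ← ha, add_assoc, one_add_one_eq_two] at h
      exact absurd (c.inj h) (by simpa using h2)
  have key : ∀ m : ℕ, c.f (s + m) = d.f (t + m) := by
    intro m
    induction m using Nat.twoStepInduction with
    | zero => simpa using h0
    | one => simpa using h1
    | more m ih ih1 =>
      push_cast at ih1 ⊢
      rw [← add_assoc, ← add_assoc] at ih1
      simpa only [add_assoc] using step _ _ ih (by simpa only [add_assoc] using ih1)
  simpa using key i.val

theorem f_add_or_f_sub_of_cycEdges_subset (h2 : (2 : ZMod n) ≠ 0)
    (hE : cycEdges c ⊆ cycEdges d) {s t : ZMod n} (h0 : c.f s = d.f t) :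
    (∀ i, c.f (s + i) = d.f (t + i)) ∨ (∀ i, c.f (s + i) = d.f (t - i)) := by
  have hmem : s(d.f t, c.f (s + 1)) ∈ cycEdges d := h0 ▸ hE ⟨s, rfl⟩
  rcases (d.mk_mem_cycEdges_iff _ _).mp hmem with h1 | h1
  · exact Or.inl (f_add_eq_of_cycEdges_subset h2 hE h0 h1)
  · right
    intro i
    have hE' : cycEdges c ⊆ cycEdges d.reverse := d.cycEdges_reverse ▸ hE
    have := f_add_eq_of_cycEdges_subset h2 hE' (t := -t) (by simpa [reverse] using h0)
      (by simpa [reverse, neg_add_eq_sub] using h1) i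
    simpa [reverse, neg_add_eq_sub] using this

end SameEdges

end AltCycle

theorem two_mul_natCast_ne_zero {a ell N : ℕ} [NeZero N] (hell : a * ell = N) (ha : 2 < a) :
    2 * (ell : ZMod N) ≠ 0 := by
  have hN := NeZero.ne N
  have hell0 : 0 < ell := Nat.pos_of_ne_zero (by rintro rfl; omega)
  intro h
  have hdvd : N ∣ 2 * ell := (ZMod.natCast_eq_zero_iff _ _).mp (by push_cast; exact h)
  have := Nat.le_of_dvd (by omega) hdvd
  nlinarith

namespace Setup

variable (S : Setup V)

instance : NeZero (2 * S.r) := ⟨by have := S.r_pos; omega⟩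

theorem O_map_iff {g : S.Γ ≃g S.Γ} (hg : g ∈ S.G) {u w : V} :
    S.O (g u) (g w) ↔ S.O u w := by
  refine ⟨fun h => ?_, fun h => S.O_inv g hg h⟩
  simpa using S.O_inv g⁻¹ (S.G.inv_mem hg) h

def mapCycle {n : ℕ} (g : S.Γ ≃g S.Γ) (hg : g ∈ S.G) (c : AltCycle S.Γ S.O n) :
    AltCycle S.Γ S.O n where
  f i := g (c.f i)
  inj _ _ h := c.inj (g.injective h)
  adj i := g.map_adj_iff.mpr (c.adj i)
  alt i := by rw [S.O_map_iff hg, S.O_map_iff hg]; exact c.alt i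

theorem cycEdges_mapCycle {n : ℕ} (g : S.Γ ≃g S.Γ) (hg : g ∈ S.G) (c : AltCycle S.Γ S.O n) :
    cycEdges (S.mapCycle g hg c) = Sym2.map g '' cycEdges c := by
  simp only [cycEdges, ← Set.range_comp]
  rfl

theorem O_add_one_iff_O_sub_one {n : ℕ} (c : AltCycle S.Γ S.O n) (t : ZMod n) :
    S.O (c.f t) (c.f (t + 1)) ↔ S.O (c.f t) (c.f (t - 1)) := by
  have halt := c.alt (t - 1)
  rw [sub_add_cancel, show t - 1 + 2 = t + 1 by ring] at halt
  rw [S.O_choice (c.adj t), S.O_choice (c.adj_sub_one t)]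
  exact not_congr halt.symm

theorem exists_mem_G_of_O_iff {u w u' w' : V} (h : S.Γ.Adj u w) (h' : S.Γ.Adj u' w')
    (hO : S.O u w ↔ S.O u' w') : ∃ g ∈ S.G, g u = u' ∧ g w = w' := by
  by_cases hu : S.O u w
  · exact S.O_orbit hu (hO.mp hu)
  · obtain ⟨g, hg, h1, h2⟩ :=
      S.O_orbit ((S.O_choice h.symm).mpr hu) ((S.O_choice h'.symm).mpr (mt hO.mpr hu))
    exact ⟨g, hg, h2, h1⟩

theorem exists_altCycle_mk_mem_cycEdges {u w : V} (h : S.Γ.Adj u w) :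
    ∃ d : AltCycle S.Γ S.O (2 * S.r), s(u, w) ∈ cycEdges d := by
  obtain ⟨v⟩ := S.conn.nonempty
  obtain ⟨_, ⟨c, rfl⟩, -⟩ := Set.nonempty_of_ncard_ne_zero (by rw [S.alt_cover v]; norm_num)
  obtain ⟨g, hg, ⟨h0, h1⟩ | ⟨h0, h1⟩⟩ := S.hat.2.1 (c.adj 0) h
  · exact ⟨S.mapCycle g hg c, 0, by simp only [mapCycle, h0, h1]⟩
  · exact ⟨S.mapCycle g hg c, 0, by simp only [mapCycle, h0, h1, Sym2.eq_swap]⟩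

variable {S}

theorem cycEdges_eq_or_eq {b b' d : AltCycle S.Γ S.O (2 * S.r)}
    (hne : cycEdges b ≠ cycEdges b') {x : V} (hb : x ∈ cycVerts b) (hb' : x ∈ cycVerts b')
    (hd : x ∈ cycVerts d) : cycEdges d = cycEdges b ∨ cycEdges d = cycEdges b' := by
  have := S.finite
  have hsub : {cycEdges b, cycEdges b'} ⊆
      {E | IsAltEdgeSet S.Γ S.O (2 * S.r) E ∧ x ∈ suppOf E} := by
    rintro E (rfl | rfl)
    exacts [⟨⟨b, rfl⟩, AltCycle.mem_suppOf_cycEdges hb⟩,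
      ⟨⟨b', rfl⟩, AltCycle.mem_suppOf_cycEdges hb'⟩]
  have hpair := Set.eq_of_subset_of_ncard_le hsub (by rw [S.alt_cover x, Set.ncard_pair hne])
  have hdE : cycEdges d ∈ {E | IsAltEdgeSet S.Γ S.O (2 * S.r) E ∧ x ∈ suppOf E} :=
    ⟨⟨d, rfl⟩, AltCycle.mem_suppOf_cycEdges hd⟩
  rwa [← hpair] at hdE

/-- At a vertex of a shared edge, two distinct cycles would cover at most three of its four
neighbours. -/
theorem cycEdges_eq_of_mem {b b' : AltCycle S.Γ S.O (2 * S.r)} {e : Sym2 V}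
    (hb : e ∈ cycEdges b) (hb' : e ∈ cycEdges b') : cycEdges b = cycEdges b' := by
  have := S.finite
  by_contra hne
  obtain ⟨k, rfl⟩ := hb
  obtain ⟨k', hk'⟩ := AltCycle.mem_cycVerts_of_mk_mem_cycEdges hb'
  let N : AltCycle S.Γ S.O (2 * S.r) → Set V := fun c => {y | s(b.f k, y) ∈ cycEdges c}
  have hN : ∀ c : AltCycle S.Γ S.O (2 * S.r), ∀ t, c.f t = b.f k → (N c).ncard ≤ 2 := by
    intro c t ht
    have : N c = {c.f (t + 1), c.f (t - 1)} := by
      ext y; simp only [N, ← ht, c.mk_mem_cycEdges_iff]; rfl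
    rw [this]
    exact (Set.ncard_insert_le _ _).trans (by rw [Set.ncard_singleton])
  have hsub : S.Γ.neighborSet (b.f k) ⊆ N b ∪ N b' := by
    intro y hy
    obtain ⟨d, hd⟩ := S.exists_altCycle_mk_mem_cycEdges hy
    rcases cycEdges_eq_or_eq hne ⟨k, rfl⟩ ⟨k', hk'⟩
      (AltCycle.mem_cycVerts_of_mk_mem_cycEdges hd) with h | h
    · exact Or.inl (show s(b.f k, y) ∈ cycEdges b from h ▸ hd)
    · exact Or.inr (show s(b.f k, y) ∈ cycEdges b' from h ▸ hd)
  have hinter : 0 < (N b ∩ N b').ncard :=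
    (Set.ncard_pos (Set.toFinite _)).mpr ⟨b.f (k + 1), ⟨k, rfl⟩, hb'⟩
  have := Set.ncard_union_add_ncard_inter (N b) (N b')
  have := Set.ncard_le_ncard hsub
  have := hN b k rfl
  have := hN b' k' hk'
  rw [S.tetra] at *
  omega

theorem exists_mem_G_reflect (h2 : (2 : ZMod (2 * S.r)) ≠ 0) (b : AltCycle S.Γ S.O (2 * S.r))
    (s : ZMod (2 * S.r)) : ∃ (ρ : S.Γ ≃g S.Γ) (hρ : ρ ∈ S.G),
      cycEdges (S.mapCycle ρ hρ b) = cycEdges b ∧ ∀ i, ρ (b.f (s + i)) = b.f (s - i) := by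
  obtain ⟨ρ, hρ, hρs, hρs1⟩ :=
    S.exists_mem_G_of_O_iff (b.adj s) (b.adj_sub_one s) (S.O_add_one_iff_O_sub_one b s)
  have hmem : s(ρ (b.f s), ρ (b.f (s + 1))) ∈ cycEdges b := by
    rw [hρs, hρs1, b.mk_mem_cycEdges_iff]; exact Or.inr rfl
  have hE := cycEdges_eq_of_mem (b := S.mapCycle ρ hρ b) ⟨s, rfl⟩ hmem
  refine ⟨ρ, hρ, hE, ?_⟩
  rcases (S.mapCycle ρ hρ b).f_add_or_f_sub_of_cycEdges_subset h2 hE.le hρs with h | h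
  · have := b.inj ((h 1).symm.trans hρs1)
    exact absurd (by linear_combination this) h2
  · exact h

/-- The reflection of `b` at `b.f s` from `G` maps `b'` onto itself, reversing it or fixing it
pointwise; in the second case it fixes every common vertex of `b` and `b'`. -/
theorem exists_reflection_or (h2 : (2 : ZMod (2 * S.r)) ≠ 0)
    {b b' : AltCycle S.Γ S.O (2 * S.r)} (hne : cycEdges b ≠ cycEdges b')
    {s s' : ZMod (2 * S.r)} (hw : b.f s = b'.f s') :
    (∃ ρ : V → V, (∀ i, ρ (b.f (s + i)) = b.f (s - i)) ∧
        ∀ j, ρ (b'.f (s' + j)) = b'.f (s' - j)) ∨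
      ∀ p q, b.f p = b'.f q → 2 * s = 2 * p := by
  obtain ⟨ρ, hρ, hE, hb⟩ := S.exists_mem_G_reflect h2 b s
  have hρw : ρ (b'.f s') = b'.f s' := by simpa [hw] using hb 0
  have hE' : cycEdges (S.mapCycle ρ hρ b') = cycEdges b' := by
    refine (cycEdges_eq_or_eq hne ⟨s, hw⟩ ⟨s', rfl⟩ ⟨s', hρw⟩).resolve_left fun h => hne ?_
    rw [← h, S.cycEdges_mapCycle, S.cycEdges_mapCycle] at hE
    exact Set.image_injective.mpr (Sym2.map.injective ρ.injective) hE
  rcases (S.mapCycle ρ hρ b').f_add_or_f_sub_of_cycEdges_subset h2 hE'.le hρw with h | h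
  · refine Or.inr fun p q hx => ?_
    have hρp : ρ (b.f p) = b.f (s - (p - s)) := by simpa using hb (p - s)
    have hρq : ρ (b'.f q) = b'.f q := by simpa [mapCycle] using h (q - s')
    have := b.inj (hρp.symm.trans (by rw [hx, hρq]))
    linear_combination this
  · exact Or.inl ⟨ρ, hb, h⟩

/-- The composite of the reflections at `0` and at `p` translates `b` by `2 * p` and `b'` by
`2 * q`. -/
theorem f_mul_eq_of_two_mul_ne_zero {b b' : AltCycle S.Γ S.O (2 * S.r)}
    (hne : cycEdges b ≠ cycEdges b') (h00 : b.f 0 = b'.f 0) {p q : ZMod (2 * S.r)}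
    (hx : b.f p = b'.f q) (hp : 2 * p ≠ 0) (m : ℕ) : b.f (m * p) = b'.f (m * q) := by
  have h2 : (2 : ZMod (2 * S.r)) ≠ 0 := left_ne_zero_of_mul hp
  obtain ⟨ρ₀, hρ₀, hρ₀'⟩ := (exists_reflection_or h2 hne h00).resolve_right
    fun h => hp (by simpa using (h p q hx).symm)
  obtain ⟨ρ₁, hρ₁, hρ₁'⟩ := (exists_reflection_or h2 hne hx).resolve_right
    fun h => hp (by simpa using h 0 0 h00)
  induction m using Nat.twoStepInduction with
  | zero => simpa using h00
  | one => simpa using hx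
  | more m ih _ =>
    have hb : ρ₁ (ρ₀ (b.f (m * p))) = b.f ((m + 2 : ℕ) * p) := by
      rw [← zero_add (_ * p), hρ₀, ← add_sub_cancel p (0 - _), hρ₁]
      push_cast; ring_nf
    have hb' : ρ₁ (ρ₀ (b'.f (m * q))) = b'.f ((m + 2 : ℕ) * q) := by
      rw [← zero_add (_ * q), hρ₀', ← add_sub_cancel q (0 - _), hρ₁']
      push_cast; ring_nf
    rw [← hb, ← hb', ih]

theorem f_mul_eq_of_lt_att {b b' : AltCycle S.Γ S.O (2 * S.r)}
    (hne : cycEdges b ≠ cycEdges b') (h00 : b.f 0 = b'.f 0) {ell : ℕ}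
    (hell : S.att * ell = 2 * S.r) {q : ZMod (2 * S.r)} (hx : b.f ell = b'.f q) {i : ℕ}
    (hi : i < S.att) : b.f (i * ell) = b'.f (i * q) := by
  by_cases hatt : S.att ≤ 2
  · have : i < 2 := by omega
    interval_cases i <;> simpa
  · exact f_mul_eq_of_two_mul_ne_zero hne h00 hx (two_mul_natCast_ne_zero hell (by omega)) i

end Setup

end HalfArc


open HalfArc

/-- Lemma 3.1 of the paper. -/
theorem statement_0 {V : Type*} (S : Setup V) (J : JumpData S)
    (hmem : J.c.f ((J.ell : ℕ)) = J.c'.f ((J.qt * J.ell : ℕ))) :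
    (∀ i : ℕ, i < S.att → J.c.f ((i * J.ell : ℕ)) = J.c'.f ((i * J.qt * J.ell : ℕ))) ∧
    (J.c'.f ((J.ell : ℕ)) = J.c.f ((J.qh * J.ell : ℕ)) →
      ∀ i : ℕ, i < S.att → J.c'.f ((i * J.ell : ℕ)) = J.c.f ((i * J.qh * J.ell : ℕ))) ∧
    (J.c'.f ((J.ell : ℕ)) = J.c.f (-((J.qh * J.ell : ℕ) : ZMod (2 * S.r))) →
      ∀ i : ℕ, i < S.att →
        J.c'.f ((i * J.ell : ℕ)) = J.c.f (-((i * J.qh * J.ell : ℕ) : ZMod (2 * S.r)))) := by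
  have h00 : J.c.f 0 = J.c'.f 0 := J.hc.trans J.hc'.symm
  refine ⟨fun i hi => ?_, fun hx i hi => ?_, fun hx i hi => ?_⟩
  · simpa [mul_assoc] using Setup.f_mul_eq_of_lt_att J.hne h00 J.hell hmem hi
  · simpa [mul_assoc] using Setup.f_mul_eq_of_lt_att J.hne.symm h00.symm J.hell hx hi
  · simpa [mul_assoc] using Setup.f_mul_eq_of_lt_att J.hne.symm h00.symm J.hell hx hi
end

section
/- Let Γ be a tetravalent G-half-arc-transitive graph for some G ≤ Aut(Γ) with att_G(Γ) < rad_G(Γ). Then the kernel K_G(Alt_G(Γ)) acts semiregularly on the vertices of Γ, i.e. every nontrivial element of K_G(Alt_G(Γ)) fixes no vertex of Γ. -/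
/-! Common definitions for tetravalent half-arc-transitive graph theory. -/

open SimpleGraph Set

open HalfArc

/-!
Each edge lies on exactly one `G`-alternating cycle (the two alternating cycles through a
vertex must share out its four edges), so an element of the kernel acts on every alternating
cycle `c` as a rotation or a reflection, and if it fixes a vertex `c i` it is trivial on `c` or
the reflection about `c i`. The reflection is impossible when `att < r`: the other alternating
cycle through `c (i + 1)` would also pass through `c (i - 1)`, hence be invariant under the
element of `G` rotating `c` by two steps, and so meet `c` in the `r` vertices `c (i + 1 + 2j)`.
Thus a kernel element fixing a vertex fixes its neighbours, and by connectedness it is trivial.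
-/

lemma SimpleGraph.Preconnected.forall_of_forall_adj {V : Type*} {Γ : SimpleGraph V}
    (hΓ : Γ.Preconnected) {p : V → Prop} {v : V} (hv : p v)
    (hadj : ∀ ⦃u w⦄, Γ.Adj u w → p u → p w) (u : V) : p u :=
  ((reachable_iff_reflTransGen v u).1 (hΓ v u)).rec hv fun _ h hp => hadj h hp

namespace ZMod

variable {n : ℕ}

lemma forall_of_forall_add_one [NeZero n] {p : ZMod n → Prop} (h0 : p 0)
    (hsucc : ∀ i, p i → p (i + 1)) (i : ZMod n) : p i := by
  rw [← natCast_zmod_val i]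
  induction i.val with
  | zero => exact_mod_cast h0
  | succ m ih => exact_mod_cast hsucc _ ih

lemma two_ne_zero_of_two_lt (hn : 2 < n) : (2 : ZMod n) ≠ 0 := by
  intro h
  have h2 : ((2 : ℕ) : ZMod n) = 0 := by exact_mod_cast h
  rw [natCast_eq_zero_iff] at h2
  exact absurd (Nat.le_of_dvd two_pos h2) (by omega)

lemma exists_eq_add_or_eq_sub_of_forall_add_one (hn : 2 < n) {σ : ZMod n → ZMod n}
    (hσ : σ.Injective) (hstep : ∀ i, σ (i + 1) = σ i + 1 ∨ σ (i + 1) = σ i - 1) :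
    ∃ k, (∀ i, σ i = i + k) ∨ (∀ i, σ i = k - i) := by
  have : NeZero n := ⟨by omega⟩
  have h2 := two_ne_zero_of_two_lt hn
  have hturn : ∀ i, σ (i + 1 + 1) ≠ σ i := fun i h => h2 (by linear_combination hσ h)
  have hdiff : ∀ i, σ (i + 1 + 1) - σ (i + 1) = σ (i + 1) - σ i := by
    intro i
    rcases hstep i with h | h <;> rcases hstep (i + 1) with h' | h'
    · rw [h', h]; ring
    · exact absurd (by rw [h', h]; ring) (hturn i)
    · exact absurd (by rw [h', h]; ring) (hturn i)
    · rw [h', h]; ring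
  have hconst : ∀ i, σ (i + 1) - σ i = σ 1 - σ 0 :=
    forall_of_forall_add_one (by rw [zero_add]) fun i hi => (hdiff i).trans hi
  have haffine : ∀ i, σ i = σ 0 + (σ 1 - σ 0) * i :=
    forall_of_forall_add_one (by ring) fun i hi => by linear_combination hconst i + hi
  refine ⟨σ 0, ?_⟩
  rcases hstep 0 with h | h <;> rw [zero_add] at h
  · exact Or.inl fun i => by linear_combination haffine i + i * h
  · exact Or.inr fun i => by linear_combination haffine i + i * h

end ZMod

namespace HalfArc

variable {V : Type*}

lemma suppOf_image_map (φ : V → V) (E : Set (Sym2 V)) :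
    suppOf (Sym2.map φ '' E) = φ '' suppOf E := by
  ext v
  constructor
  · rintro ⟨e, ⟨e₀, he₀, rfl⟩, hv⟩
    obtain ⟨u, hu, rfl⟩ := Sym2.mem_map.mp hv
    exact ⟨u, ⟨e₀, he₀, hu⟩, rfl⟩
  · rintro ⟨u, ⟨e, he, hu⟩, rfl⟩
    exact ⟨Sym2.map φ e, ⟨e, he, rfl⟩, Sym2.mem_map.mpr ⟨u, hu, rfl⟩⟩

lemma mem_suppOf_image_map {φ : V → V} {E : Set (Sym2 V)} {u : V} (h : u ∈ suppOf E) :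
    φ u ∈ suppOf (Sym2.map φ '' E) := by
  rw [suppOf_image_map]
  exact mem_image_of_mem φ h

namespace AltCycle

variable {Γ : SimpleGraph V} {O : V → V → Prop} {n : ℕ} (c : AltCycle Γ O n)

lemma suppOf_cycEdges : suppOf (cycEdges c) = cycVerts c := by
  ext v
  constructor
  · rintro ⟨e, ⟨i, rfl⟩, hv⟩
    rcases Sym2.mem_iff.mp hv with rfl | rfl
    · exact ⟨i, rfl⟩
    · exact ⟨i + 1, rfl⟩
  · rintro ⟨i, rfl⟩
    exact ⟨s(c.f i, c.f (i + 1)), ⟨i, rfl⟩, Sym2.mem_mk_left _ _⟩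

lemma apply_mem_suppOf (i : ZMod n) : c.f i ∈ suppOf (cycEdges c) := by
  rw [suppOf_cycEdges]
  exact ⟨i, rfl⟩

lemma eq_add_one_or_eq_sub_one_of_mem_cycEdges {i j : ZMod n}
    (h : s(c.f i, c.f j) ∈ cycEdges c) : j = i + 1 ∨ j = i - 1 := by
  obtain ⟨k, hk⟩ := h
  rcases Sym2.eq_iff.mp hk with ⟨hi, hj⟩ | ⟨hj, hi⟩
  · rw [← c.inj hi, ← c.inj hj]
    exact Or.inl rfl
  · rw [← c.inj hi, ← c.inj hj]
    exact Or.inr (by ring)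

lemma incident_cycEdges_eq (i : ZMod n) :
    {e ∈ cycEdges c | c.f i ∈ e} = {s(c.f (i - 1), c.f i), s(c.f i, c.f (i + 1))} := by
  have hpred : s(c.f (i - 1), c.f (i - 1 + 1)) = s(c.f (i - 1), c.f i) := by
    rw [sub_add_cancel]
  ext e
  simp only [mem_ofPred_eq, mem_insert_iff, mem_singleton_iff]
  constructor
  · rintro ⟨⟨j, rfl⟩, hmem⟩
    rcases Sym2.mem_iff.mp hmem with h | h
    · exact Or.inr (by rw [c.inj h])
    · obtain rfl : j = i - 1 := by rw [c.inj h, add_sub_cancel_right]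
      exact Or.inl hpred
  · rintro (rfl | rfl)
    · exact ⟨⟨i - 1, hpred⟩, Sym2.mem_mk_right _ _⟩
    · exact ⟨⟨i, rfl⟩, Sym2.mem_mk_left _ _⟩

lemma ncard_incident_cycEdges (hn : 2 < n) (i : ZMod n) :
    {e ∈ cycEdges c | c.f i ∈ e}.ncard = 2 := by
  rw [incident_cycEdges_eq]
  refine ncard_pair fun heq => ZMod.two_ne_zero_of_two_lt hn ?_
  rcases Sym2.eq_iff.mp heq with ⟨h, -⟩ | ⟨h, -⟩
  · linear_combination -2 * c.inj h
  · linear_combination -(c.inj h)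

lemma exists_rotation_or_reflection (hn : 2 < n) {φ : V → V} (hφ : φ.Injective)
    (hE : Sym2.map φ '' cycEdges c = cycEdges c) :
    ∃ k, (∀ i, φ (c.f i) = c.f (i + k)) ∨ (∀ i, φ (c.f i) = c.f (k - i)) := by
  have hV : ∀ i, φ (c.f i) ∈ cycVerts c := fun i => by
    rw [← suppOf_cycEdges, ← hE, suppOf_image_map]
    exact mem_image_of_mem φ (c.apply_mem_suppOf i)
  choose σ hσ using hV
  have hσinj : σ.Injective := fun i j h => c.inj (hφ (by rw [← hσ, ← hσ, h]))
  have hstep : ∀ i, σ (i + 1) = σ i + 1 ∨ σ (i + 1) = σ i - 1 := fun i => by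
    refine c.eq_add_one_or_eq_sub_one_of_mem_cycEdges ?_
    rw [hσ, hσ, ← hE]
    exact ⟨_, ⟨i, rfl⟩, Sym2.map_mk _ _ _⟩
  obtain ⟨k, hk | hk⟩ := ZMod.exists_eq_add_or_eq_sub_of_forall_add_one hn hσinj hstep
  · exact ⟨k, Or.inl fun i => by rw [← hσ, hk]⟩
  · exact ⟨k, Or.inr fun i => by rw [← hσ, hk]⟩

lemma orient_iff_orient_add_two (hO : ∀ ⦃u v⦄, Γ.Adj u v → (O u v ↔ ¬ O v u)) (i : ZMod n) :
    O (c.f i) (c.f (i + 1)) ↔ O (c.f (i + 2)) (c.f (i + 2 + 1)) := by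
  have h1 := c.alt i
  have h2 := c.alt (i + 1)
  have h3 := hO (c.adj (i + 1))
  have h4 := hO (c.adj (i + 2))
  rw [show i + 1 + 1 = i + 2 by ring, show i + 1 + 2 = i + 2 + 1 by ring] at *
  tauto

def map (φ : Γ ≃g Γ) (hφ : ∀ u v, O (φ u) (φ v) ↔ O u v) : AltCycle Γ O n where
  f i := φ (c.f i)
  inj _ _ h := c.inj (φ.injective h)
  adj i := φ.map_adj_iff.mpr (c.adj i)
  alt i := by simpa only [hφ] using c.alt i

lemma cycEdges_map (φ : Γ ≃g Γ) (hφ : ∀ u v, O (φ u) (φ v) ↔ O u v) :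
    cycEdges (c.map φ hφ) = Sym2.map φ '' cycEdges c := by
  rw [cycEdges, cycEdges, ← range_comp]
  rfl

lemma le_ncard_of_forall_mem {r : ℕ} (c : AltCycle Γ O (2 * r)) (a : ZMod (2 * r))
    {T : Set V} (hT : T.Finite) (h : ∀ j < r, c.f (a + 2 * j) ∈ T) : r ≤ T.ncard := by
  have hinj : InjOn (fun j : ℕ => c.f (a + 2 * j)) (Iio r) := by
    intro j hj j' hj' hjj
    rw [mem_Iio] at hj hj'
    have h2 : ((2 * j : ℕ) : ZMod (2 * r)) = ((2 * j' : ℕ) : ZMod (2 * r)) := by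
      exact_mod_cast add_left_cancel (c.inj hjj)
    rw [ZMod.natCast_eq_natCast_iff', Nat.mod_eq_of_lt (by omega), Nat.mod_eq_of_lt (by omega)]
      at h2
    omega
  have hle := ncard_le_ncard_of_injOn (s := Iio r) _ (fun j hj => h j hj) hinj hT
  rwa [← Finset.coe_Iio, ncard_coe_finset, Nat.card_Iio] at hle

end AltCycle

end HalfArc

namespace HalfArc.Setup

variable {V : Type*} (S : Setup V)

lemma O_apply_iff {g : S.Γ ≃g S.Γ} (hg : g ∈ S.G) (u v : V) : S.O (g u) (g v) ↔ S.O u v :=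
  ⟨fun h => by simpa using S.O_inv g⁻¹ (S.G.inv_mem hg) h, fun h => S.O_inv g hg h⟩

lemma isAltEdgeSet_image {g : S.Γ ≃g S.Γ} (hg : g ∈ S.G) {E : Set (Sym2 V)}
    (hE : IsAltEdgeSet S.Γ S.O (2 * S.r) E) :
    IsAltEdgeSet S.Γ S.O (2 * S.r) (Sym2.map g '' E) := by
  obtain ⟨c, rfl⟩ := hE
  exact ⟨c.map g (S.O_apply_iff hg), c.cycEdges_map _ _⟩

lemma eq_or_eq_or_eq_of_mem_suppOf {u : V} {A B C : Set (Sym2 V)}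
    (hA : IsAltEdgeSet S.Γ S.O (2 * S.r) A) (hB : IsAltEdgeSet S.Γ S.O (2 * S.r) B)
    (hC : IsAltEdgeSet S.Γ S.O (2 * S.r) C) (huA : u ∈ suppOf A) (huB : u ∈ suppOf B)
    (huC : u ∈ suppOf C) : A = B ∨ A = C ∨ B = C := by
  by_contra! h
  obtain ⟨hAB, hAC, hBC⟩ := h
  have hsub : {A, B, C} ⊆ {E | IsAltEdgeSet S.Γ S.O (2 * S.r) E ∧ u ∈ suppOf E} := by
    simp only [insert_subset_iff, singleton_subset_iff]
    exact ⟨⟨hA, huA⟩, ⟨hB, huB⟩, ⟨hC, huC⟩⟩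
  have hle := ncard_le_ncard hsub (finite_of_ncard_ne_zero (by rw [S.alt_cover u]; norm_num))
  rw [S.alt_cover u, ncard_eq_three.mpr ⟨A, B, C, hAB, hAC, hBC, rfl⟩] at hle
  omega

lemma exists_isAltEdgeSet_ne (u : V) (A : Set (Sym2 V)) :
    ∃ B, IsAltEdgeSet S.Γ S.O (2 * S.r) B ∧ u ∈ suppOf B ∧ B ≠ A := by
  obtain ⟨B, ⟨hB, huB⟩, hne⟩ := exists_ne_of_one_lt_ncard (by rw [S.alt_cover u]; norm_num) A
  exact ⟨B, hB, huB, hne⟩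

lemma exists_mem_cycEdges {u w : V} (h : S.Γ.Adj u w) :
    ∃ c : AltCycle S.Γ S.O (2 * S.r), s(u, w) ∈ cycEdges c := by
  obtain ⟨E, ⟨c, rfl⟩, -⟩ := nonempty_of_ncard_ne_zero (by rw [S.alt_cover u]; norm_num)
  obtain ⟨g, hg, hgc⟩ := S.hat.2.1 (by simpa using c.adj 0) h
  refine ⟨c.map g (S.O_apply_iff hg), 0, ?_⟩
  show s(g (c.f 0), g (c.f (0 + 1))) = s(u, w)
  rw [zero_add]
  rcases hgc with ⟨h0, h1⟩ | ⟨h0, h1⟩ <;> rw [h0, h1]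
  exact Sym2.eq_swap

lemma isAltEdgeSet_eq_of_mem (hr : 1 < S.r) {E E' : Set (Sym2 V)}
    (hE : IsAltEdgeSet S.Γ S.O (2 * S.r) E) (hE' : IsAltEdgeSet S.Γ S.O (2 * S.r) E')
    {e : Sym2 V} (he : e ∈ E) (he' : e ∈ E') : E = E' := by
  have := S.finite
  by_contra hne
  obtain ⟨c, rfl⟩ := hE
  obtain ⟨c', rfl⟩ := hE'
  obtain ⟨i, rfl⟩ := he
  set u := c.f i
  obtain ⟨i', hi'⟩ : u ∈ cycVerts c' := by
    rw [← c'.suppOf_cycEdges]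
    exact ⟨_, he', Sym2.mem_mk_left _ _⟩
  have hcover : (fun w => s(u, w)) '' S.Γ.neighborSet u ⊆
      {e ∈ cycEdges c | u ∈ e} ∪ {e ∈ cycEdges c' | u ∈ e} := by
    rintro _ ⟨w, hw, rfl⟩
    obtain ⟨d, hd⟩ := S.exists_mem_cycEdges hw
    rcases S.eq_or_eq_or_eq_of_mem_suppOf ⟨d, rfl⟩ ⟨c, rfl⟩ ⟨c', rfl⟩
      ⟨_, hd, Sym2.mem_mk_left _ _⟩ (c.apply_mem_suppOf i) ⟨_, he', Sym2.mem_mk_left _ _⟩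
      with h | h | h
    · exact Or.inl ⟨h ▸ hd, Sym2.mem_mk_left _ _⟩
    · exact Or.inr ⟨h ▸ hd, Sym2.mem_mk_left _ _⟩
    · exact absurd h hne
  have hfour : ((fun w => s(u, w)) '' S.Γ.neighborSet u).ncard = 4 := by
    rw [InjOn.ncard_image fun a _ b _ hab => Sym2.congr_right.mp hab, S.tetra u]
  have hthree : ({e ∈ cycEdges c | u ∈ e} ∪ {e ∈ cycEdges c' | u ∈ e}).ncard ≤ 3 := by
    have hsum := ncard_union_add_ncard_inter {e ∈ cycEdges c | u ∈ e} {e ∈ cycEdges c' | u ∈ e}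
    have hc' : {e ∈ cycEdges c' | u ∈ e}.ncard = 2 := by
      rw [← hi']
      exact c'.ncard_incident_cycEdges (by omega) i'
    rw [c.ncard_incident_cycEdges (by omega), hc'] at hsum
    have hshared : 0 < ({e ∈ cycEdges c | u ∈ e} ∩ {e ∈ cycEdges c' | u ∈ e}).ncard :=
      (ncard_pos).mpr ⟨_, ⟨⟨i, rfl⟩, Sym2.mem_mk_left _ _⟩, he', Sym2.mem_mk_left _ _⟩
    omega
  have := ncard_le_ncard hcover
  omega

lemma image_cycEdges_eq_of_mem (hr : 1 < S.r) {g : S.Γ ≃g S.Γ} (hg : g ∈ S.G)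
    (c : AltCycle S.Γ S.O (2 * S.r)) {e : Sym2 V} (he : e ∈ cycEdges c)
    (hge : Sym2.map g e ∈ cycEdges c) : Sym2.map g '' cycEdges c = cycEdges c :=
  S.isAltEdgeSet_eq_of_mem hr (S.isAltEdgeSet_image hg ⟨c, rfl⟩) ⟨c, rfl⟩ (mem_image_of_mem _ he) hge

lemma image_eq_self_of_apply_mem_suppOf {φ : S.Γ ≃g S.Γ} (hφ : φ ∈ S.G)
    {A B : Set (Sym2 V)} (hA : IsAltEdgeSet S.Γ S.O (2 * S.r) A)
    (hB : IsAltEdgeSet S.Γ S.O (2 * S.r) B) (hBA : B ≠ A) (hφA : Sym2.map φ '' A = A) {u : V}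
    (huA : u ∈ suppOf A) (huB : u ∈ suppOf B) (hφu : φ u ∈ suppOf B) :
    Sym2.map φ '' B = B := by
  have hne : Sym2.map φ '' B ≠ A := by
    rw [← hφA]
    exact fun heq => hBA (image_injective.mpr (Sym2.map.injective φ.injective) heq)
  have hφuA : φ u ∈ suppOf A := by
    rw [← hφA]
    exact mem_suppOf_image_map huA
  rcases S.eq_or_eq_or_eq_of_mem_suppOf hA hB (S.isAltEdgeSet_image hφ hB) hφuA hφu
    (mem_suppOf_image_map huB) with h | h | h
  · exact absurd h.symm hBA
  · exact absurd h.symm hne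
  · exact h.symm

/-- The arcs `(c 0, c 1)` and `(c 2, c 3)` have the same orientation, so an element of `G`
maps one to the other. -/
lemma exists_rotation_two (hr : 1 < S.r) (c : AltCycle S.Γ S.O (2 * S.r)) :
    ∃ h ∈ S.G, ∀ i, h (c.f i) = c.f (i + 2) := by
  obtain ⟨h, hG, h0, h1⟩ : ∃ h ∈ S.G, h (c.f 0) = c.f 2 ∧ h (c.f 1) = c.f (2 + 1) := by
    have horient := c.orient_iff_orient_add_two S.O_choice 0
    rw [zero_add, zero_add] at horient
    by_cases hO : S.O (c.f 0) (c.f 1)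
    · exact S.O_orbit hO (horient.mp hO)
    · have hadj : S.Γ.Adj (c.f 0) (c.f 1) := by simpa using c.adj 0
      obtain ⟨h, hG, h1, h0⟩ := S.O_orbit ((S.O_choice hadj.symm).mpr hO)
        ((S.O_choice (c.adj 2).symm).mpr (mt horient.mpr hO))
      exact ⟨h, hG, h0, h1⟩
  have hE := S.image_cycEdges_eq_of_mem hr hG c (e := s(c.f 0, c.f (0 + 1))) ⟨0, rfl⟩
    ⟨2, by simp only [Sym2.map_mk, zero_add, h0, h1]⟩
  obtain ⟨k, hk | hk⟩ := c.exists_rotation_or_reflection (by omega) h.injective hE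
  · have hk2 : 0 + k = 2 := c.inj ((hk 0).symm.trans h0)
    exact ⟨h, hG, fun i => by rw [hk, ← hk2, zero_add]⟩
  · have e0 : k - 0 = 2 := c.inj ((hk 0).symm.trans h0)
    have e1 : k - 1 = 2 + 1 := c.inj ((hk 1).symm.trans h1)
    exact absurd (by linear_combination e0 - e1) (ZMod.two_ne_zero_of_two_lt (by omega))

lemma not_forall_apply_reflection (har : S.att < S.r) {g : S.Γ ≃g S.Γ} (hg : g ∈ S.altKernel)
    (c : AltCycle S.Γ S.O (2 * S.r)) (i₀ : ZMod (2 * S.r)) :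
    ¬ ∀ i, g (c.f (i₀ + i)) = c.f (i₀ - i) := by
  intro hrefl
  have hr : 1 < S.r := by have := S.att_pos; omega
  have := S.finite
  obtain ⟨h, hG, hrot⟩ := S.exists_rotation_two hr c
  have hhc : Sym2.map h '' cycEdges c = cycEdges c :=
    S.image_cycEdges_eq_of_mem hr hG c ⟨0, rfl⟩ ⟨2, by simp only [Sym2.map_mk, hrot]; ring_nf⟩
  obtain ⟨B, hB, hBup, hBc⟩ := S.exists_isAltEdgeSet_ne (c.f (i₀ + 1)) (cycEdges c)
  have hBdown : c.f (i₀ - 1) ∈ suppOf B := by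
    rw [← hrefl, ← hg.2 B hB]
    exact mem_suppOf_image_map hBup
  have hhB : Sym2.map h '' B = B := by
    refine S.image_eq_self_of_apply_mem_suppOf hG ⟨c, rfl⟩ hB hBc hhc
      (c.apply_mem_suppOf (i₀ - 1)) hBdown ?_
    rwa [hrot, show i₀ - 1 + 2 = i₀ + 1 by ring]
  have hodd : ∀ j : ℕ, c.f (i₀ + 1 + 2 * j) ∈ suppOf B := by
    intro j
    induction j with
    | zero => simpa using hBup
    | succ j ih =>
      have := mem_suppOf_image_map (φ := h) ih
      rw [hhB, hrot] at this
      rwa [Nat.cast_succ, mul_add_one, ← add_assoc]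
  obtain ⟨d, rfl⟩ := hB
  have hatt := S.att_eq _ ⟨c, d, hBc.symm, ⟨_, ⟨_, rfl⟩, d.suppOf_cycEdges ▸ hBup⟩, rfl⟩
  have hle := c.le_ncard_of_forall_mem (i₀ + 1) (toFinite (cycVerts c ∩ cycVerts d))
    fun j _ => ⟨⟨_, rfl⟩, d.suppOf_cycEdges ▸ hodd j⟩
  omega

lemma apply_eq_of_apply_eq (har : S.att < S.r) {g : S.Γ ≃g S.Γ} (hg : g ∈ S.altKernel)
    (c : AltCycle S.Γ S.O (2 * S.r)) {i₀ : ZMod (2 * S.r)} (hfix : g (c.f i₀) = c.f i₀)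
    (i : ZMod (2 * S.r)) : g (c.f i) = c.f i := by
  have := S.att_pos
  obtain ⟨k, hk | hk⟩ :=
    c.exists_rotation_or_reflection (by omega) g.injective (hg.2 _ ⟨c, rfl⟩)
  · have hk0 : i₀ + k = i₀ := c.inj ((hk i₀).symm.trans hfix)
    rw [hk, show k = 0 by linear_combination hk0, add_zero]
  · have hk0 : k - i₀ = i₀ := c.inj ((hk i₀).symm.trans hfix)
    refine absurd (fun j => ?_) (S.not_forall_apply_reflection har hg c i₀)
    rw [hk]
    congr 1
    linear_combination hk0

lemma apply_eq_of_adj (har : S.att < S.r) {g : S.Γ ≃g S.Γ} (hg : g ∈ S.altKernel) {u w : V}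
    (hu : g u = u) (huw : S.Γ.Adj u w) : g w = w := by
  obtain ⟨c, i, hi⟩ := S.exists_mem_cycEdges huw
  rcases Sym2.eq_iff.mp hi with ⟨rfl, rfl⟩ | ⟨rfl, rfl⟩ <;>
    exact S.apply_eq_of_apply_eq har hg c hu _

end HalfArc.Setup

/-- if `att_G(Γ) < rad_G(Γ)` then the kernel of the action of `G`
on the `G`-alternating cycles acts semiregularly on vertices. -/
theorem statement_7 {V : Type*} (S : Setup V) (har : S.att < S.r) :
    ∀ g ∈ S.altKernel, g ≠ 1 → ∀ v : V, g v ≠ v := by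
  intro g hg hg1 v hv
  refine hg1 (DFunLike.ext g 1 fun u => ?_)
  exact S.conn.preconnected.forall_of_forall_adj (p := fun u => g u = u) hv
    (fun _ _ huw hu => S.apply_eq_of_adj har hg hu huw) u
end
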